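/- arXiv:1805.06908 — 4 statements merged into one kernel-verified Lean document; each statement's English description precedes it below -/
import Mathlib

section
/- Let P be a multilinear polynomial over the dyadic rationals D in variables x_1,...,x_n (i.e. an element of D[x]/⟨x_i²-x_i⟩), and let Q be a linear Boolean polynomial (a sum of distinct variables over Z_2). Then for any variable x_i, the order of P after substituting x_i by the lifting ⌈Q⌉ is at most the order of P, where the order of a term (a/2^b)·x^α with a odd is b + |α| - 1, and the order of a polynomial is the maximum order of its terms. -/
/-!
Adding `1` to the order makes it subadditive on products, `ord (P * Q) ≤ ord P + ord Q + 1`,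
since `2`-adic valuations add and degrees add; on sums it is bounded by the maximum, by the
ultrametric inequality. Hence substituting polynomials of order at most `0` for the variables
cannot raise the order of any term, and so of `P`. The lifting `⌈Q⌉` has order `0`: its term
of degree `k` has coefficient `(-2)^(k-1)`.
-/

open MvPolynomial

/-- The order of a polynomial over the dyadic rationals: the order of a term
`(a/2^b)·x^α` with `a` odd is `b + |α| - 1`, and the order of a polynomial is the
maximum order over its terms (⊥ for the zero polynomial). -/
noncomputable def pord {σ : Type*} (P : MvPolynomial σ ℚ) : WithBot ℤ :=
  P.support.sup fun α =>
    ((-(padicValRat 2 (coeff α P)) + (α.sum fun _ e => (e : ℤ)) - 1 : ℤ) : WithBot ℤ)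

/-- The lifting `⌈∑_{j∈S} x_j⌉ = ∑_{∅≠S'⊆S} (-2)^(|S'|-1) ∏_{j∈S'} x_j` of a linear
Boolean polynomial to the dyadic rationals. -/
noncomputable def liftLin {σ : Type*} [DecidableEq σ] (S : Finset σ) :
    MvPolynomial σ ℚ :=
  ∑ T ∈ S.powerset.erase ∅, C ((-2 : ℚ) ^ (T.card - 1)) * ∏ j ∈ T, X j

namespace MvPolynomial

variable {σ : Type*}

theorem pord_le_iff {P : MvPolynomial σ ℚ} {m : ℤ} :
    pord P ≤ m ↔ ∀ β, coeff β P ≠ 0 → (β.degree : ℤ) - 1 - padicValRat 2 (coeff β P) ≤ m := by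
  have hdeg (β : σ →₀ ℕ) : (β.sum fun _ e => (e : ℤ)) = β.degree := by
    simp [Finsupp.sum, Finsupp.degree_apply]
  simp only [pord, Finset.sup_le_iff, WithBot.coe_le_coe, mem_support_iff, hdeg]
  exact forall₂_congr fun _ _ => by constructor <;> intro h <;> linarith

theorem pord_add_le {P Q : MvPolynomial σ ℚ} {m : ℤ} (hP : pord P ≤ m) (hQ : pord Q ≤ m) :
    pord (P + Q) ≤ m := by
  rw [pord_le_iff] at hP hQ ⊢
  intro β hβ
  rw [coeff_add] at hβ ⊢
  by_cases hp : coeff β P = 0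
  · simpa [hp] using hQ β (by simpa [hp] using hβ)
  by_cases hq : coeff β Q = 0
  · simpa [hq] using hP β (by simpa [hq] using hβ)
  have hmin := padicValRat.min_le_padicValRat_add (p := 2) hβ
  have := hP β hp
  have := hQ β hq
  omega

theorem pord_sum_le {ι : Type*} (s : Finset ι) {g : ι → MvPolynomial σ ℚ} {m : ℤ}
    (h : ∀ j ∈ s, pord (g j) ≤ m) : pord (∑ j ∈ s, g j) ≤ m := by
  classical
  induction s using Finset.induction_on with
  | empty => simp [pord]
  | insert j s hj ih =>
    rw [Finset.sum_insert hj]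
    exact pord_add_le (h j (s.mem_insert_self j)) (ih fun k hk => h k (s.mem_insert_of_mem hk))

theorem pord_monomial_le (α : σ →₀ ℕ) (c : ℚ) :
    pord (monomial α c) ≤ ((α.degree : ℤ) - 1 - padicValRat 2 c : ℤ) := by
  classical
  rw [pord_le_iff]
  intro β hβ
  rw [coeff_monomial] at hβ ⊢
  split_ifs at hβ ⊢ with h
  · subst h; rfl
  · exact absurd rfl hβ

theorem pord_mul_le {P Q : MvPolynomial σ ℚ} {a b : ℤ} (hP : pord P ≤ a) (hQ : pord Q ≤ b) :
    pord (P * Q) ≤ (a + b + 1 : ℤ) := by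
  rw [pord_le_iff] at hP hQ
  rw [P.as_sum, Q.as_sum, Finset.sum_mul_sum]
  refine pord_sum_le _ fun α _ => pord_sum_le _ fun γ _ => ?_
  rw [monomial_mul]
  by_cases hc : coeff α P * coeff γ Q = 0
  · simp [hc, pord]
  have hp := hP α (left_ne_zero_of_mul hc)
  have hq := hQ γ (right_ne_zero_of_mul hc)
  refine (pord_monomial_le _ _).trans (WithBot.coe_le_coe.mpr ?_)
  rw [padicValRat.mul (left_ne_zero_of_mul hc) (right_ne_zero_of_mul hc), map_add]
  push_cast
  omega

theorem pord_C_le (c : ℚ) : pord (C c : MvPolynomial σ ℚ) ≤ (-1 - padicValRat 2 c : ℤ) := by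
  simpa using pord_monomial_le (0 : σ →₀ ℕ) c

theorem pord_one_le : pord (1 : MvPolynomial σ ℚ) ≤ (-1 : ℤ) := by
  simpa using pord_C_le (σ := σ) 1

theorem pord_X_le (j : σ) : pord (X j : MvPolynomial σ ℚ) ≤ (0 : ℤ) := by
  simpa [X] using pord_monomial_le (Finsupp.single j 1) 1

theorem pord_pow_le {g : MvPolynomial σ ℚ} (hg : pord g ≤ (0 : ℤ)) (e : ℕ) :
    pord (g ^ e) ≤ (e - 1 : ℤ) := by
  induction e with
  | zero => simpa using pord_one_le
  | succ n ih =>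
    rw [pow_succ]
    exact (pord_mul_le ih hg).trans (WithBot.coe_le_coe.mpr (by omega))

theorem pord_prod_le {ι : Type*} (s : Finset ι) {g : ι → MvPolynomial σ ℚ} {a : ι → ℤ}
    (h : ∀ j ∈ s, pord (g j) ≤ a j) : pord (∏ j ∈ s, g j) ≤ ((∑ j ∈ s, (a j + 1)) - 1 : ℤ) := by
  classical
  induction s using Finset.induction_on with
  | empty => simpa using pord_one_le
  | insert j s hj ih =>
    rw [Finset.prod_insert hj, Finset.sum_insert hj]
    refine (pord_mul_le (h j (s.mem_insert_self j))
      (ih fun k hk => h k (s.mem_insert_of_mem hk))).trans (WithBot.coe_le_coe.mpr ?_)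
    omega

theorem pord_liftLin_le [DecidableEq σ] (S : Finset σ) : pord (liftLin S) ≤ (0 : ℤ) := by
  refine pord_sum_le _ fun T hT => ?_
  have hcard : 1 ≤ T.card :=
    Finset.card_pos.mpr (Finset.nonempty_iff_ne_empty.mpr (Finset.mem_erase.mp hT).1)
  have hv : padicValRat 2 ((-2 : ℚ) ^ (T.card - 1)) = (T.card : ℤ) - 1 := by
    rw [padicValRat.pow, show (-2 : ℚ) = -((2 : ℕ) : ℚ) by norm_num, padicValRat.neg,
      padicValRat.self one_lt_two]
    omega
  have hprod := pord_prod_le (g := X) (a := fun _ => 0) T fun j _ => pord_X_le j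
  refine (pord_mul_le (pord_C_le _) hprod).trans (WithBot.coe_le_coe.mpr ?_)
  rw [hv]
  simp

theorem pord_bind₁_le {τ : Type*} (f : σ → MvPolynomial τ ℚ) (hf : ∀ j, pord (f j) ≤ (0 : ℤ))
    (P : MvPolynomial σ ℚ) : pord (bind₁ f P) ≤ pord P := by
  refine WithBot.forall_le_coe_iff_le.mp fun m hm => ?_
  rw [pord_le_iff] at hm
  conv_lhs => rw [P.as_sum, map_sum]
  refine pord_sum_le _ fun α hα => ?_
  rw [bind₁_monomial]
  have hprod := pord_prod_le α.support fun j _ => pord_pow_le (hf j) (α j)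
  refine (pord_mul_le (pord_C_le _) hprod).trans (WithBot.coe_le_coe.mpr ?_)
  have hα' := hm α (mem_support_iff.mp hα)
  simp only [sub_add_cancel]
  rw [Finsupp.degree_apply, Nat.cast_sum] at hα'
  omega

end MvPolynomial

theorem stmt2_general {σ : Type*} [DecidableEq σ] (P : MvPolynomial σ ℚ)
    (i : σ) (S : Finset σ) :
    pord (bind₁ (fun j => if j = i then liftLin S else X j) P) ≤ pord P := by
  refine pord_bind₁_le _ (fun j => ?_) P
  split_ifs
  · exact pord_liftLin_le S
  · exact pord_X_le j

/-- substituting the lifting of a linear Boolean polynomial `Q` (not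
containing `x_i`) for a variable `x_i` in a multilinear dyadic polynomial `P` does not
increase the order. -/
theorem stmt2 {σ : Type*} [DecidableEq σ] (P : MvPolynomial σ ℚ)
    (hml : ∀ α ∈ P.support, ∀ j : σ, α j ≤ 1)
    (hdyadic : ∀ α ∈ P.support, ∃ (a : ℤ) (b : ℕ), coeff α P = (a : ℚ) / 2 ^ b)
    (i : σ) (S : Finset σ) (hiS : i ∉ S) :
    pord (bind₁ (fun j => if j = i then liftLin S else X j) P) ≤ pord P :=
  stmt2_general P i S
end

section
/- ω rule correctness: let Q : Z_2^n × Z_2^m → Z_2 be a Boolean-valued function and R : Z_2^n × Z_2^m → D. Then the linear operator |x⟩ ↦ (1/√(2^{m+1})) ∑_{y_0∈Z_2} ∑_{y∈Z_2^m} e^{2πi(y_0/4 + y_0·Q(x,y)/2 + R(x,y))} |f(x,y)⟩ equals the operator |x⟩ ↦ (1/√(2^m)) ∑_{y∈Z_2^m} e^{2πi(1/8 + 3·Q(x,y)/4 + R(x,y))} |f(x,y)⟩. Concretely this follows from the scalar identity 1 + i·(-1)^q = √2 · e^{2πi(1/8 + 3q/4)} for q ∈ {0,1}. -/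
open scoped BigOperators

/-- The computational basis state `|z⟩` in the `2^n`-dimensional Hilbert space. -/
noncomputable def ket {n : ℕ} (z : Fin n → ZMod 2) : (Fin n → ZMod 2) → ℂ :=
  fun w => if w = z then 1 else 0

/-- The phase `e^{2πi t}` for a (dyadic) rational `t`. -/
noncomputable def ph (t : ℚ) : ℂ := Complex.exp (2 * (Real.pi : ℂ) * Complex.I * (t : ℂ))

/-! The ω rule rests on the scalar identity `1 + i·(-1)^q = √2 · e^{2πi(1/8 + 3q/4)}` for
`q ∈ {0, 1}`: summing out `y₀` turns each pair of terms into a single term with an extra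
factor `√2`, which is exactly the ratio of the two normalisations. -/

lemma ph_add (a b : ℚ) : ph (a + b) = ph a * ph b := by
  rw [ph, ph, ph, ← Complex.exp_add]
  push_cast
  ring_nf

lemma ph_eq_exp_mul_I (t : ℚ) : ph t = Complex.exp ((2 * Real.pi * t : ℝ) * Complex.I) := by
  rw [ph]
  push_cast
  ring_nf

lemma ph_quarter : ph (1 / 4) = Complex.I := by
  rw [ph_eq_exp_mul_I, Complex.exp_mul_I, ← Complex.ofReal_cos, ← Complex.ofReal_sin]
  norm_num [show 2 * Real.pi * (1 / 4) = Real.pi / 2 by ring]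

lemma ph_half : ph (1 / 2) = -1 := by
  rw [ph_eq_exp_mul_I, Complex.exp_mul_I, ← Complex.ofReal_cos, ← Complex.ofReal_sin]
  norm_num [show 2 * Real.pi * (1 / 2) = Real.pi by ring]

lemma ph_eighth : ph (1 / 8) = (1 + Complex.I) / (Real.sqrt 2 : ℝ) := by
  rw [ph_eq_exp_mul_I, Complex.exp_mul_I, ← Complex.ofReal_cos, ← Complex.ofReal_sin,
    show 2 * Real.pi * ((1 / 8 : ℚ) : ℝ) = Real.pi / 4 by push_cast; ring,
    Real.cos_pi_div_four, Real.sin_pi_div_four]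
  have hs : (Real.sqrt 2 : ℂ) ^ 2 = 2 := by
    exact_mod_cast Real.sq_sqrt zero_le_two
  have h2 : (Real.sqrt 2 : ℂ) ≠ 0 := by
    exact_mod_cast Real.sqrt_ne_zero'.mpr zero_lt_two
  field_simp
  push_cast
  linear_combination (1 + Complex.I) / 2 * hs

lemma one_add_ph_quarter_add_half (q : ZMod 2) :
    1 + ph (1 / 4 + q.val / 2) = (Real.sqrt 2 : ℝ) * ph (1 / 8 + 3 * q.val / 4) := by
  have hs : (Real.sqrt 2 : ℂ) ^ 2 = 2 := by
    exact_mod_cast Real.sq_sqrt zero_le_two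
  have h2 : (Real.sqrt 2 : ℂ) ≠ 0 := by
    exact_mod_cast Real.sqrt_ne_zero'.mpr zero_lt_two
  obtain hq | hq : q.val = 0 ∨ q.val = 1 := by have := q.val_lt; omega
  · norm_num [hq, ph_quarter, ph_eighth]
    field_simp
  · rw [hq, show (1 / 8 + 3 * (1 : ℕ) / 4 : ℚ) = 1 / 8 + (1 / 4 + 1 / 2) by norm_num,
      Nat.cast_one, ph_add, ph_add, ph_add, ph_quarter, ph_half, ph_eighth]
    field_simp
    linear_combination Complex.I_sq

lemma ZMod.sum_two {M : Type*} [AddCommMonoid M] (g : ZMod 2 → M) :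
    ∑ a : ZMod 2, g a = g 0 + g 1 :=
  Fin.sum_univ_two g

lemma sum_zmod_two_ph (q : ZMod 2) (r : ℚ) :
    ∑ y0 : ZMod 2, ph ((y0.val : ℚ) / 4 + (y0.val : ℚ) * (q.val : ℚ) / 2 + r)
      = (Real.sqrt 2 : ℝ) * ph (1 / 8 + 3 * (q.val : ℚ) / 4 + r) := by
  rw [ZMod.sum_two, ZMod.val_zero, ZMod.val_one, Nat.cast_zero, Nat.cast_one,
    show (0 / 4 + 0 * q.val / 2 + r : ℚ) = r by ring,
    show (1 / 4 + 1 * q.val / 2 + r : ℚ) = (1 / 4 + q.val / 2) + r by ring,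
    ph_add _ r, ph_add _ r, ← one_add_mul, one_add_ph_quarter_add_half, mul_assoc]

lemma inv_sqrt_two_pow_succ_mul_sqrt_two (m : ℕ) :
    (Real.sqrt (2 ^ (m + 1)))⁻¹ * Real.sqrt 2 = (Real.sqrt (2 ^ m))⁻¹ := by
  have hm : Real.sqrt (2 ^ m) ≠ 0 := Real.sqrt_ne_zero'.mpr (by positivity)
  rw [pow_succ, Real.sqrt_mul (by positivity)]
  field_simp

/-- ω rule correctness.  For Boolean-valued `Q` and dyadic-valued `R`,
`(1/√(2^(m+1))) ∑_{y₀}∑_y e^{2πi(y₀/4 + y₀Q(x,y)/2 + R(x,y))}|f(x,y)⟩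
  = (1/√(2^m)) ∑_y e^{2πi(1/8 + 3Q(x,y)/4 + R(x,y))}|f(x,y)⟩`. -/
theorem stmt5 (n m : ℕ)
    (Q : (Fin n → ZMod 2) → (Fin m → ZMod 2) → ZMod 2)
    (R : (Fin n → ZMod 2) → (Fin m → ZMod 2) → ℚ)
    (f : (Fin n → ZMod 2) → (Fin m → ZMod 2) → (Fin n → ZMod 2)) :
    ∀ x : Fin n → ZMod 2,
      (((Real.sqrt (2 ^ (m + 1)))⁻¹ : ℝ) : ℂ) •
          ∑ y0 : ZMod 2, ∑ y : Fin m → ZMod 2,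
            ph ((y0.val : ℚ) / 4 + (y0.val : ℚ) * ((Q x y).val : ℚ) / 2 + R x y) •
              ket (f x y)
        = (((Real.sqrt (2 ^ m))⁻¹ : ℝ) : ℂ) •
          ∑ y : Fin m → ZMod 2,
            ph ((1 : ℚ) / 8 + 3 * ((Q x y).val : ℚ) / 4 + R x y) • ket (f x y) := by
  intro x
  simp only [Finset.sum_comm (γ := ZMod 2), ← Finset.sum_smul, sum_zmod_two_ph, Finset.smul_sum,
    smul_smul]
  refine Finset.sum_congr rfl fun y _ => ?_
  rw [← mul_assoc, ← Complex.ofReal_mul, inv_sqrt_two_pow_succ_mul_sqrt_two]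
end

section
/- Non-equivalence lemma: suppose U is the partial linear map |x⟩ ↦ (1/√(2^{m+1})) ∑_{y_0∈Z_2} ∑_{y∈Z_2^m} e^{2πi((y_0/2)Q(x) + R(x,y))} |f(x,y)⟩ where Q : Z_2^n → Z_2 is a non-zero Boolean-valued polynomial depending only on the input variables x (not on any path variables). Then U is not the identity map on basis states; in fact there exists x ∈ Z_2^n with U|x⟩ = 0 ≠ |x⟩. -/
open scoped BigOperators

open MvPolynomial

lemma ph_half_add (t : ℚ) : ph (1/2 + t) = - ph t := by
  unfold ph
  push_cast
  rw [mul_add, Complex.exp_add]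
  have : 2 * (Real.pi : ℂ) * Complex.I * (1/2 : ℂ) = Real.pi * Complex.I := by ring
  rw [this, Complex.exp_pi_mul_I]
  ring

/-- non-equivalence lemma.  If `Q` is a non-zero (multilinear) Boolean
polynomial in the input variables only, then the path-sum operator
`|x⟩ ↦ (1/√(2^(m+1))) ∑_{y₀}∑_y e^{2πi((y₀/2)Q(x) + R(x,y))}|f(x,y)⟩`
is not the identity on basis states: there exists `x` with `U|x⟩ = 0 ≠ |x⟩`. -/
theorem stmt9 (n m : ℕ)
    (Q : MvPolynomial (Fin n) (ZMod 2))
    (hml : ∀ α ∈ Q.support, ∀ j : Fin n, α j ≤ 1)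
    (hQ : Q ≠ 0)
    (R : (Fin n → ZMod 2) → (Fin m → ZMod 2) → ℚ)
    (f : (Fin n → ZMod 2) → (Fin m → ZMod 2) → (Fin n → ZMod 2)) :
    ∃ x : Fin n → ZMod 2,
      (((Real.sqrt (2 ^ (m + 1)))⁻¹ : ℝ) : ℂ) •
          ∑ y0 : ZMod 2, ∑ y : Fin m → ZMod 2,
            ph ((y0.val : ℚ) * (((MvPolynomial.eval x Q).val : ℚ)) / 2 + R x y) •
              ket (f x y)
        = 0
      ∧ (0 : (Fin n → ZMod 2) → ℂ) ≠ ket x := by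
  classical
  have hp : Q ∈ MvPolynomial.restrictDegree (Fin n) (ZMod 2) (Fintype.card (ZMod 2) - 1) := by
    rw [MvPolynomial.mem_restrictDegree]
    simpa using hml
  obtain ⟨x, hx⟩ : ∃ x, MvPolynomial.eval x Q ≠ 0 := by
    by_contra h
    push_neg at h
    exact hQ (MvPolynomial.eq_zero_of_eval_eq_zero (σ := Fin n) (K := ZMod 2) Q h hp)
  have hx1 : (MvPolynomial.eval x Q).val = 1 := by
    have h2 : ∀ a : ZMod 2, a ≠ 0 → a.val = 1 := by decide
    exact h2 _ hx
  refine ⟨x, ?_, ?_⟩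
  · have huniv : (Finset.univ : Finset (ZMod 2)) = {0, 1} := by decide
    rw [huniv, Finset.sum_insert (by decide), Finset.sum_singleton]
    have h0 : ((0 : ZMod 2)).val = 0 := rfl
    have h1 : ((1 : ZMod 2)).val = 1 := rfl
    rw [h0, h1, hx1]
    have : ∀ y : Fin m → ZMod 2,
        ((1 : ℚ) * (1 : ℚ) / 2 + R x y) = 1/2 + R x y := by intro y; ring
    have hsum : (∑ y : Fin m → ZMod 2, ph (((0:ℕ) : ℚ) * ((1:ℕ) : ℚ) / 2 + R x y) • ket (f x y))
        + ∑ y : Fin m → ZMod 2, ph (((1:ℕ) : ℚ) * ((1:ℕ) : ℚ) / 2 + R x y) • ket (f x y) = 0 := by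
      rw [← Finset.sum_add_distrib]
      refine Finset.sum_eq_zero fun y _ => ?_
      have e0 : ((0:ℕ) : ℚ) * ((1:ℕ) : ℚ) / 2 + R x y = R x y := by push_cast; ring
      have e1 : ((1:ℕ) : ℚ) * ((1:ℕ) : ℚ) / 2 + R x y = 1/2 + R x y := by push_cast; ring
      rw [e0, e1, ph_half_add, ← add_smul]
      simp
    rw [hsum, smul_zero]
  · intro h
    have := congrFun h x
    simp [ket] at this
end

section
/- One-bit full adder verification: the four-qubit operator |x_1x_2x_3x_4⟩ ↦ (1/2) ∑_{y_1,y_2∈Z_2} e^{2πi·y_1(y_2 + x_1x_2 + x_1x_3 + x_2x_3 + x_4)/2} |x_1, x_1⊕x_2, x_1⊕x_2⊕x_3, y_2⟩ equals the reversible full adder |x_1x_2x_3x_4⟩ ↦ |x_1, x_1⊕x_2, x_1⊕x_2⊕x_3, x_1x_2 ⊕ x_1x_3 ⊕ x_2x_3 ⊕ x_4⟩. -/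
/-- Four-qubit computational basis state `|z₁z₂z₃z₄⟩`. -/
noncomputable def ket4 (z : ZMod 2 × ZMod 2 × ZMod 2 × ZMod 2) :
    ZMod 2 × ZMod 2 × ZMod 2 × ZMod 2 → ℂ := fun w => if w = z then 1 else 0

lemma ph_natCast_div_two (n : ℕ) : ph ((n : ℚ) / 2) = (-1 : ℂ) ^ n := by
  rw [ph, ← Complex.exp_pi_mul_I, ← Complex.exp_nat_mul]
  congr 1
  push_cast
  ring

lemma sum_zmod_two_neg_one_pow_val_mul {R : Type*} [Ring R] (n : ℕ) :
    ∑ y : ZMod 2, (-1 : R) ^ (y.val * n) = if Even n then 2 else 0 := by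
  rw [show (Finset.univ : Finset (ZMod 2)) = {0, 1} from rfl, Finset.sum_pair zero_ne_one]
  rcases Nat.even_or_odd n with hn | hn
  · simp [ZMod.val_one, hn, hn.neg_one_pow, one_add_one_eq_two]
  · simp [ZMod.val_one, Nat.not_even_iff_odd.mpr hn, hn.neg_one_pow]

/-- one-bit full adder verification: the four-qubit operator
`|x₁x₂x₃x₄⟩ ↦ (1/2) ∑_{y₁,y₂} e^{2πi y₁(y₂ + x₁x₂ + x₁x₃ + x₂x₃ + x₄)/2}
  |x₁, x₁⊕x₂, x₁⊕x₂⊕x₃, y₂⟩`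
equals the reversible full adder
`|x₁x₂x₃x₄⟩ ↦ |x₁, x₁⊕x₂, x₁⊕x₂⊕x₃, x₁x₂⊕x₁x₃⊕x₂x₃⊕x₄⟩`. -/
theorem stmt16 :
    ∀ x1 x2 x3 x4 : ZMod 2,
      ((1 : ℂ) / 2) •
          ∑ y1 : ZMod 2, ∑ y2 : ZMod 2,
            ph (((y1.val * (y2.val + x1.val * x2.val + x1.val * x3.val
                  + x2.val * x3.val + x4.val) : ℕ) : ℚ) / 2) •
              ket4 (x1, x1 + x2, x1 + x2 + x3, y2)
        = ket4 (x1, x1 + x2, x1 + x2 + x3, x1 * x2 + x1 * x3 + x2 * x3 + x4) := by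
  intro x1 x2 x3 x4
  set carry := x1 * x2 + x1 * x3 + x2 * x3 + x4
  have interference : ∀ y2 : ZMod 2,
      ∑ y1 : ZMod 2, ph (((y1.val * (y2.val + x1.val * x2.val + x1.val * x3.val
        + x2.val * x3.val + x4.val) : ℕ) : ℚ) / 2) = if y2 = carry then 2 else 0 := by
    intro y2
    simp only [ph_natCast_div_two, sum_zmod_two_neg_one_pow_val_mul,
      ← ZMod.natCast_eq_zero_iff_even]
    push_cast [ZMod.natCast_zmod_val]
    simp only [← CharTwo.add_eq_zero (a := y2), carry, add_assoc]
  rw [Finset.sum_comm]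
  simp only [← Finset.sum_smul, interference, ite_smul, zero_smul, Finset.sum_ite_eq',
    Finset.mem_univ, if_true, smul_smul]
  norm_num
end
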